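/- Let w : ℝ → (0,∞) be continuous with 1/w not Lebesgue-integrable on (−∞,0) and not Lebesgue-integrable on (0,∞), and define for t ∈ ℝ the operator T_w(t) on L²_w(ℝ) by (T_w(t)x)(ξ) = (w(ξ+μ_w(ξ,t))/w(ξ))·x(ξ+μ_w(ξ,t)). Then the group (T_w(t))_{t∈ℝ} is strongly continuous: for every x ∈ L²_w(ℝ), the map t ↦ T_w(t)x from ℝ to L²_w(ℝ) is continuous; in particular ‖T_w(t)x − x‖_{L²_w(ℝ)} → 0 as t → 0. -/

import Mathlib

open MeasureTheory Filter Set Topology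

/-- `p_w(ξ) = ∫₀^ξ w(ζ)⁻¹ dζ`. -/
noncomputable def pW (w : ℝ → ℝ) (ξ : ℝ) : ℝ := ∫ ζ in (0:ℝ)..ξ, (w ζ)⁻¹

/-- `μ_w(ξ,t) = p_w⁻¹(p_w(ξ) + t) − ξ`. -/
noncomputable def muW (w : ℝ → ℝ) (ξ t : ℝ) : ℝ :=
  Function.invFun (pW w) (pW w ξ + t) - ξ

/-- `(T_w(t)x)(ξ) = (w(ξ+μ_w(ξ,t))/w(ξ)) · x(ξ+μ_w(ξ,t))`. -/
noncomputable def Tw (w : ℝ → ℝ) (t : ℝ) (x : ℝ → ℂ) (ξ : ℝ) : ℂ :=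
  ((w (ξ + muW w ξ t) / w ξ : ℝ) : ℂ) * x (ξ + muW w ξ t)

/-!
Since `p_w' = 1/w`, the substitution `ξ = p_w⁻¹(η)` makes `x ↦ (w ∘ p_w⁻¹) · (x ∘ p_w⁻¹)` a
unitary map `L²_w(ℝ) → L²(ℝ)`, and it conjugates `T_w(t)` to the translation `η ↦ η + t`.
Strong continuity of `T_w` is therefore continuity of translations in `L²(ℝ)`. The
non-integrability of `1/w` at `±∞` is what makes `p_w` onto, so that `p_w⁻¹` is a differentiable
bijection of `ℝ`.
-/

open scoped ENNReal

theorem MeasureTheory.MemLp.integral_norm_sq_eq {α E : Type*} [MeasurableSpace α] {μ : Measure α}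
    [NormedAddCommGroup E] {f : α → E} (hf : MemLp f 2 μ) :
    ∫ a, ‖f a‖ ^ 2 ∂μ = (eLpNorm f 2 μ).toReal ^ 2 := by
  rw [hf.eLpNorm_eq_integral_rpow_norm two_ne_zero ENNReal.ofNat_ne_top,
    ENNReal.toReal_ofReal (by positivity), ← Real.rpow_natCast, ← Real.rpow_mul (by positivity)]
  simp

section Translation

variable {G E : Type*} [AddGroup G] [TopologicalSpace G] [IsTopologicalAddGroup G]
  [MeasurableSpace G] [BorelSpace G] {μ : Measure G} [μ.IsAddRightInvariant]
  [μ.InnerRegularCompactLTTop] [IsLocallyFiniteMeasure μ] [NormedAddCommGroup E]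

theorem tendsto_eLpNorm_comp_add_right_sub {p : ℝ≥0∞} [Fact (1 ≤ p)] (hp : p ≠ ∞) {g : G → E}
    (hg : MemLp g p μ) (t₀ : G) :
    Tendsto (fun t => eLpNorm (fun η => g (η + t) - g (η + t₀)) p μ) (𝓝 t₀) (𝓝 0) := by
  let shift : G → C(G, G) := fun t => ⟨(· + t), by fun_prop⟩
  have hshift : Continuous shift :=
    ContinuousMap.continuous_of_continuous_uncurry _ (continuous_snd.add continuous_fst)
  have hmp t : MeasurePreserving (shift t) μ μ := measurePreserving_add_right μ t
  let T t := Lp.compMeasurePreserving (shift t) (hmp t) (hg.toLp g)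
  have hT : Continuous T := continuous_const.compMeasurePreservingLp hshift hmp hp
  have hcoe t : T t =ᵐ[μ] fun η => g (η + t) :=
    (Lp.coeFn_compMeasurePreserving _ _).trans ((hmp t).quasiMeasurePreserving.ae_eq hg.coeFn_toLp)
  have hedist t : edist (T t) (T t₀) = eLpNorm (fun η => g (η + t) - g (η + t₀)) p μ := by
    rw [Lp.edist_def]
    exact eLpNorm_congr_ae ((hcoe t).sub (hcoe t₀))
  simpa [hedist] using (hT.tendsto t₀).edist (tendsto_const_nhds (x := T t₀))

theorem tendsto_integral_norm_comp_add_right_sub_sq {g : G → E} (hg : MemLp g 2 μ) (t₀ : G) :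
    Tendsto (fun t => ∫ η, ‖g (η + t) - g (η + t₀)‖ ^ 2 ∂μ) (𝓝 t₀) (𝓝 0) := by
  have hshift t : MemLp (fun η => g (η + t)) 2 μ :=
    hg.comp_measurePreserving (measurePreserving_add_right μ t)
  have hsq t : ∫ η, ‖g (η + t) - g (η + t₀)‖ ^ 2 ∂μ
      = (eLpNorm (fun η => g (η + t) - g (η + t₀)) 2 μ).toReal ^ 2 :=
    ((hshift t).sub (hshift t₀)).integral_norm_sq_eq
  simpa [hsq] using ((ENNReal.tendsto_toReal ENNReal.zero_ne_top).comp
    (tendsto_eLpNorm_comp_add_right_sub ENNReal.ofNat_ne_top hg t₀)).pow 2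

end Translation

section

variable {f : ℝ → ℝ} (hf : Continuous f) (hf₀ : ∀ x, 0 ≤ f x)
include hf hf₀

theorem monotone_intervalIntegral_of_nonneg (a : ℝ) : Monotone fun x => ∫ t in a..x, f t :=
  fun x y hxy => by
    rw [← sub_nonneg, intervalIntegral.integral_interval_sub_left (hf.intervalIntegrable _ _)
      (hf.intervalIntegrable _ _)]
    exact intervalIntegral.integral_nonneg hxy fun t _ => hf₀ t

theorem tendsto_intervalIntegral_atTop_of_not_integrableOn_Ioi {a : ℝ}
    (hni : ¬ IntegrableOn f (Ioi a)) : Tendsto (fun x => ∫ t in a..x, f t) atTop atTop := by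
  refine tendsto_atTop_atTop_of_monotone (monotone_intervalIntegral_of_nonneg hf hf₀ a)
    fun M => ?_
  by_contra! hM
  refine hni (integrableOn_Ioi_of_intervalIntegral_norm_bounded M a
    (fun _ => hf.integrableOn_Ioc) tendsto_id (Eventually.of_forall fun x => ?_))
  simp only [id, Real.norm_of_nonneg (hf₀ _)]
  exact (hM x).le

theorem tendsto_intervalIntegral_atBot_of_not_integrableOn_Iio {a : ℝ}
    (hni : ¬ IntegrableOn f (Iio a)) : Tendsto (fun x => ∫ t in a..x, f t) atBot atBot := by
  refine tendsto_atBot_atBot_of_monotone (monotone_intervalIntegral_of_nonneg hf hf₀ a)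
    fun M => ?_
  by_contra! hM
  refine hni (IntegrableOn.mono_set ?_ Iio_subset_Iic_self)
  refine integrableOn_Iic_of_intervalIntegral_norm_bounded (-M) a
    (fun _ => hf.integrableOn_Ioc) tendsto_id (Eventually.of_forall fun x => ?_)
  simp only [id, Real.norm_of_nonneg (hf₀ _)]
  rw [intervalIntegral.integral_symm]
  linarith [hM x]

end

theorem MeasureTheory.Measure.quasiMeasurePreserving_of_leftInverse {E : Type*}
    [NormedAddCommGroup E] [NormedSpace ℝ E] [FiniteDimensional ℝ E] [MeasurableSpace E]
    [BorelSpace E] (μ : Measure E) [μ.IsAddHaarMeasure] {f g : E → E} (hf : Measurable f)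
    (hg : Differentiable ℝ g) (hgf : Function.LeftInverse g f) :
    Measure.QuasiMeasurePreserving f μ μ := by
  refine ⟨hf, Measure.AbsolutelyContinuous.mk fun s hs hs₀ => ?_⟩
  rw [Measure.map_apply hf hs]
  have hsub : f ⁻¹' s ⊆ g '' s := fun x hx => ⟨f x, hx, hgf x⟩
  refine measure_mono_null hsub ?_
  exact addHaar_image_eq_zero_of_differentiableOn_of_addHaar_eq_zero μ hg.differentiableOn hs₀

noncomputable def qW (w : ℝ → ℝ) : ℝ → ℝ := Function.invFun (pW w)

theorem add_muW (w : ℝ → ℝ) (ξ t : ℝ) : ξ + muW w ξ t = qW w (pW w ξ + t) :=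
  add_sub_cancel ξ _

noncomputable def Uw (w : ℝ → ℝ) (x : ℝ → ℂ) (η : ℝ) : ℂ := (w (qW w η) : ℂ) * x (qW w η)

theorem Uw_sub (w : ℝ → ℝ) (x y : ℝ → ℂ) : Uw w (x - y) = Uw w x - Uw w y :=
  funext fun _ => mul_sub _ _ _

theorem norm_Uw_sq {w : ℝ → ℝ} (hw_pos : ∀ ξ, 0 < w ξ) (x : ℝ → ℂ) (η : ℝ) :
    ‖Uw w x η‖ ^ 2 = w (qW w η) * (w (qW w η) * ‖x (qW w η)‖ ^ 2) := by
  rw [Uw, norm_mul, Complex.norm_real, Real.norm_of_nonneg (hw_pos _).le]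
  ring

section Weight

variable {w : ℝ → ℝ} (hw_cont : Continuous w) (hw_pos : ∀ ξ, 0 < w ξ)
include hw_cont hw_pos

theorem hasDerivAt_pW (ξ : ℝ) : HasDerivAt (pW w) (w ξ)⁻¹ ξ :=
  ((hw_cont.inv₀ fun ζ => (hw_pos ζ).ne').integral_hasStrictDerivAt 0 ξ).hasDerivAt

theorem differentiable_pW : Differentiable ℝ (pW w) :=
  fun ξ => (hasDerivAt_pW hw_cont hw_pos ξ).differentiableAt

theorem strictMono_pW : StrictMono (pW w) :=
  strictMono_of_hasDerivAt_pos (hasDerivAt_pW hw_cont hw_pos) fun ξ => inv_pos.2 (hw_pos ξ)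

theorem qW_pW (ξ : ℝ) : qW w (pW w ξ) = ξ :=
  Function.leftInverse_invFun (strictMono_pW hw_cont hw_pos).injective ξ

theorem Tw_zero (x : ℝ → ℂ) : Tw w 0 x = x := by
  funext ξ
  rw [Tw, add_muW, add_zero, qW_pW hw_cont hw_pos, div_self (hw_pos ξ).ne']
  simp

variable (hni_neg : ¬ IntegrableOn (fun ζ => (w ζ)⁻¹) (Iio 0))
  (hni_pos : ¬ IntegrableOn (fun ζ => (w ζ)⁻¹) (Ioi 0))
include hni_neg hni_pos

theorem surjective_pW : Function.Surjective (pW w) :=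
  have hinv := hw_cont.inv₀ fun ζ => (hw_pos ζ).ne'
  have hinv₀ ξ : 0 ≤ (w ξ)⁻¹ := (inv_pos.2 (hw_pos ξ)).le
  (differentiable_pW hw_cont hw_pos).continuous.surjective
    (tendsto_intervalIntegral_atTop_of_not_integrableOn_Ioi hinv hinv₀ hni_pos)
    (tendsto_intervalIntegral_atBot_of_not_integrableOn_Iio hinv hinv₀ hni_neg)

theorem pW_qW (η : ℝ) : pW w (qW w η) = η :=
  Function.rightInverse_invFun (surjective_pW hw_cont hw_pos hni_neg hni_pos) η

theorem continuous_qW : Continuous (qW w) := by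
  refine Monotone.continuous_of_surjective (fun a b hab => ?_)
    (Function.LeftInverse.surjective (qW_pW hw_cont hw_pos))
  rw [← (strictMono_pW hw_cont hw_pos).le_iff_le, pW_qW hw_cont hw_pos hni_neg hni_pos,
    pW_qW hw_cont hw_pos hni_neg hni_pos]
  exact hab

theorem hasDerivAt_qW (η : ℝ) : HasDerivAt (qW w) (w (qW w η)) η := by
  simpa using HasDerivAt.of_local_left_inverse
    (continuous_qW hw_cont hw_pos hni_neg hni_pos).continuousAt
    (hasDerivAt_pW hw_cont hw_pos (qW w η)) (inv_ne_zero (hw_pos (qW w η)).ne')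
    (Eventually.of_forall (pW_qW hw_cont hw_pos hni_neg hni_pos))

theorem quasiMeasurePreserving_qW : Measure.QuasiMeasurePreserving (qW w) :=
  Measure.quasiMeasurePreserving_of_leftInverse volume
    (continuous_qW hw_cont hw_pos hni_neg hni_pos).measurable
    (differentiable_pW hw_cont hw_pos) (pW_qW hw_cont hw_pos hni_neg hni_pos)

variable {E : Type*} [NormedAddCommGroup E] [NormedSpace ℝ E]

theorem integral_smul_comp_qW (F : ℝ → E) : ∫ η, w (qW w η) • F (qW w η) = ∫ ξ, F ξ := by
  have h := integral_image_eq_integral_abs_deriv_smul MeasurableSet.univ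
    (fun η _ => (hasDerivAt_qW hw_cont hw_pos hni_neg hni_pos η).hasDerivWithinAt)
    (Function.LeftInverse.injective (pW_qW hw_cont hw_pos hni_neg hni_pos)).injOn F
  rw [image_univ, (Function.LeftInverse.surjective (qW_pW hw_cont hw_pos)).range_eq,
    Measure.restrict_univ] at h
  simp_rw [h, abs_of_pos (hw_pos _)]

theorem integrable_smul_comp_qW_iff (F : ℝ → E) :
    Integrable (fun η => w (qW w η) • F (qW w η)) ↔ Integrable F := by
  have h := integrableOn_image_iff_integrableOn_abs_deriv_smul MeasurableSet.univ
    (fun η _ => (hasDerivAt_qW hw_cont hw_pos hni_neg hni_pos η).hasDerivWithinAt)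
    (Function.LeftInverse.injective (pW_qW hw_cont hw_pos hni_neg hni_pos)).injOn F
  rw [image_univ, (Function.LeftInverse.surjective (qW_pW hw_cont hw_pos)).range_eq,
    integrableOn_univ, integrableOn_univ] at h
  simp_rw [h, abs_of_pos (hw_pos _)]

theorem Uw_Tw (t : ℝ) (x : ℝ → ℂ) (η : ℝ) : Uw w (Tw w t x) η = Uw w x (η + t) := by
  have hw : (w (qW w η) : ℂ) ≠ 0 := Complex.ofReal_ne_zero.2 (hw_pos _).ne'
  rw [Uw, Tw, add_muW, pW_qW hw_cont hw_pos hni_neg hni_pos, Uw, Complex.ofReal_div]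
  field_simp

theorem integral_weight_mul_norm_sq (x : ℝ → ℂ) :
    ∫ ξ, w ξ * ‖x ξ‖ ^ 2 = ∫ η, ‖Uw w x η‖ ^ 2 := by
  rw [← integral_smul_comp_qW hw_cont hw_pos hni_neg hni_pos fun ξ => w ξ * ‖x ξ‖ ^ 2]
  simp_rw [smul_eq_mul, norm_Uw_sq hw_pos]

theorem memLp_Uw {x : ℝ → ℂ} (hx : AEStronglyMeasurable x)
    (hx₂ : Integrable fun ξ => w ξ * ‖x ξ‖ ^ 2) : MemLp (Uw w x) 2 := by
  have hwq : Continuous fun η => (w (qW w η) : ℂ) :=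
    Complex.continuous_ofReal.comp (hw_cont.comp (continuous_qW hw_cont hw_pos hni_neg hni_pos))
  have hmeas : AEStronglyMeasurable (Uw w x) := hwq.aestronglyMeasurable.mul
    (hx.comp_quasiMeasurePreserving (quasiMeasurePreserving_qW hw_cont hw_pos hni_neg hni_pos))
  refine (memLp_two_iff_integrable_sq_norm hmeas).2 ?_
  simpa only [norm_Uw_sq hw_pos, smul_eq_mul] using
    (integrable_smul_comp_qW_iff hw_cont hw_pos hni_neg hni_pos _).2 hx₂

end Weight

theorem stmt_12 (w : ℝ → ℝ) (hw_cont : Continuous w) (hw_pos : ∀ ξ, 0 < w ξ)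
    (hni_neg : ¬ IntegrableOn (fun ζ => (w ζ)⁻¹) (Set.Iio 0))
    (hni_pos : ¬ IntegrableOn (fun ζ => (w ζ)⁻¹) (Set.Ioi 0)) :
    ∀ x : ℝ → ℂ, AEStronglyMeasurable x volume →
      Integrable (fun ξ => w ξ * ‖x ξ‖ ^ 2) →
      (∀ t₀ : ℝ, Tendsto (fun t => ∫ ξ, w ξ * ‖Tw w t x ξ - Tw w t₀ x ξ‖ ^ 2)
        (𝓝 t₀) (𝓝 0)) ∧
      Tendsto (fun t => ∫ ξ, w ξ * ‖Tw w t x ξ - x ξ‖ ^ 2) (𝓝 0) (𝓝 0) := by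
  intro x hx hx₂
  have hU := memLp_Uw hw_cont hw_pos hni_neg hni_pos hx hx₂
  have hcont (t₀ : ℝ) :
      Tendsto (fun t => ∫ ξ, w ξ * ‖Tw w t x ξ - Tw w t₀ x ξ‖ ^ 2) (𝓝 t₀) (𝓝 0) := by
    refine (tendsto_integral_norm_comp_add_right_sub_sq hU t₀).congr fun t => ?_
    have h := integral_weight_mul_norm_sq hw_cont hw_pos hni_neg hni_pos (Tw w t x - Tw w t₀ x)
    simpa only [Uw_sub, Pi.sub_apply, Uw_Tw hw_cont hw_pos hni_neg hni_pos] using h.symm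
  refine ⟨hcont, ?_⟩
  simpa only [Tw_zero hw_cont hw_pos] using hcont 0
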